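/- Let U = conv{z^1, …, z^N} ⊆ ℝ^L and consider the two-stage robust LP P with d = 0: min_{x,y(·)} max_{z∈U} c(z)ᵀx subject to A(z)x + B y(z) ≤ r(z) for all z ∈ U. Let OPT be its optimal worst-case value and let z̄ be any point in the relative interior of U. Suppose (x̄, ȳ^1, …, ȳ^N) is optimal to the LP: min c(z̄)ᵀx subject to c(z^i)ᵀx ≤ OPT and A(z^i)x + B y^i ≤ r(z^i) for all i = 1,…,N. Then x̄ is Pareto adaptively robustly optimal for P. -/

import Mathlib

open Matrix

section

variable {nx ny m L N : ℕ}

/-- Feasibility of `(x, y(·))` for the two-stage robust LP. -/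
def TwoStageFeasible (A : (Fin L → ℝ) →ᵃ[ℝ] Matrix (Fin m) (Fin nx) ℝ)
    (B : Matrix (Fin m) (Fin ny) ℝ) (r : (Fin L → ℝ) →ᵃ[ℝ] (Fin m → ℝ))
    (U : Set (Fin L → ℝ)) (x : Fin nx → ℝ) (y : (Fin L → ℝ) → (Fin ny → ℝ)) : Prop :=
  ∀ z ∈ U, ∀ i, (A z).mulVec x i + B.mulVec (y z) i ≤ r z i

/-- With `d = 0`: `x` admits a feasible rule and is worst-case optimal. -/
def IsAROx (c : (Fin L → ℝ) →ᵃ[ℝ] (Fin nx → ℝ))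
    (A : (Fin L → ℝ) →ᵃ[ℝ] Matrix (Fin m) (Fin nx) ℝ) (B : Matrix (Fin m) (Fin ny) ℝ)
    (r : (Fin L → ℝ) →ᵃ[ℝ] (Fin m → ℝ)) (U : Set (Fin L → ℝ)) (x : Fin nx → ℝ) : Prop :=
  (∃ y, TwoStageFeasible A B r U x y) ∧
    ∀ x', (∃ y', TwoStageFeasible A B r U x' y') →
      (⨆ z : U, c z ⬝ᵥ x) ≤ (⨆ z : U, c z ⬝ᵥ x')

/-- Pareto adaptive robust optimality of `x` (objective independent of `y`). -/
def IsPAROx (c : (Fin L → ℝ) →ᵃ[ℝ] (Fin nx → ℝ))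
    (A : (Fin L → ℝ) →ᵃ[ℝ] Matrix (Fin m) (Fin nx) ℝ) (B : Matrix (Fin m) (Fin ny) ℝ)
    (r : (Fin L → ℝ) →ᵃ[ℝ] (Fin m → ℝ)) (U : Set (Fin L → ℝ)) (x : Fin nx → ℝ) : Prop :=
  IsAROx c A B r U x ∧
    ¬ ∃ xbar, IsAROx c A B r U xbar ∧
      (∀ z ∈ U, c z ⬝ᵥ xbar ≤ c z ⬝ᵥ x) ∧ ∃ z ∈ U, c z ⬝ᵥ xbar < c z ⬝ᵥ x


/-! Because all data are affine in `z`, a first-stage decision feasible at the vertices `z^i` is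
feasible on `U = conv{z^i}` (choose the recourse pointwise), and its worst-case cost is attained
at a vertex; hence `x̄` is worst-case optimal. If `x'` Pareto-dominated `x̄`, then
`z ↦ c(z)ᵀ(x̄ - x')` would be an affine function that is nonnegative on `U`, positive somewhere,
and, by optimality of `x̄` for the vertex LP, zero at the relative-interior point `z̄`. But an
affine function minimised over a set at a relative-interior point is constant on the set: moving
from any point `y` through `z̄` slightly beyond it stays in the set. -/

open AffineMap Topology

def AffineMap.dotProductRight {R P n : Type*} [CommRing R] [AddCommGroup P] [Module R P]
    [Fintype n] (f : P →ᵃ[R] (n → R)) (x : n → R) : P →ᵃ[R] R :=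
  ((dotProductBilin R R).flip x).toAffineMap.comp f

@[simp]
theorem AffineMap.dotProductRight_apply {R P n : Type*} [CommRing R] [AddCommGroup P]
    [Module R P] [Fintype n] (f : P →ᵃ[R] (n → R)) (x : n → R) (z : P) :
    f.dotProductRight x z = f z ⬝ᵥ x :=
  rfl

section IntrinsicInterior

variable {E : Type*} [AddCommGroup E] [Module ℝ E] [TopologicalSpace E] [IsTopologicalAddGroup E]
  [ContinuousSMul ℝ E] {s : Set E} {x y : E}

theorem exists_lineMap_mem_of_mem_intrinsicInterior (hx : x ∈ intrinsicInterior ℝ s)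
    (hy : y ∈ affineSpan ℝ s) : ∃ τ : ℝ, 1 < τ ∧ lineMap y x τ ∈ s := by
  obtain ⟨w, hw, rfl⟩ := mem_intrinsicInterior.mp hx
  let γ : ℝ → affineSpan ℝ s := fun τ => ⟨lineMap y w τ, AffineMap.lineMap_mem τ hy w.2⟩
  have hγ : Continuous γ := lineMap_continuous.subtype_mk _
  have hγ1 : γ 1 = w := Subtype.ext (lineMap_apply_one _ _)
  have hnhds : ∀ᶠ τ in 𝓝 1, γ τ ∈ ((↑) ⁻¹' s : Set (affineSpan ℝ s)) :=
    hγ.continuousAt.preimage_mem_nhds (hγ1 ▸ mem_interior_iff_mem_nhds.mp hw)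
  obtain ⟨τ, hτs, hτ⟩ :=
    ((hnhds.filter_mono nhdsWithin_le_nhds).and (self_mem_nhdsWithin (s := Set.Ioi 1))).exists
  exact ⟨τ, hτ, hτs⟩

theorem AffineMap.eq_of_isMinOn_of_mem_intrinsicInterior (f : E →ᵃ[ℝ] ℝ)
    (hx : x ∈ intrinsicInterior ℝ s) (hmin : IsMinOn f s x) (hy : y ∈ s) : f y = f x := by
  obtain ⟨τ, hτ, hτs⟩ :=
    exists_lineMap_mem_of_mem_intrinsicInterior hx (subset_affineSpan ℝ s hy)
  have hfτ : f (lineMap y x τ) = f y + τ * (f x - f y) := by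
    rw [apply_lineMap, lineMap_apply_module, smul_eq_mul, smul_eq_mul]
    ring
  have h1 : f x ≤ f y := hmin hy
  have h2 : f x ≤ f y + τ * (f x - f y) := hfτ ▸ hmin hτs
  nlinarith

end IntrinsicInterior

theorem convex_setOf_exists_recourse {E ι κ ρ : Type*} [AddCommGroup E] [Module ℝ E]
    [Fintype κ] [Fintype ρ] (A : E →ᵃ[ℝ] Matrix ι κ ℝ) (B : Matrix ι ρ ℝ)
    (r : E →ᵃ[ℝ] (ι → ℝ)) (x : κ → ℝ) :
    Convex ℝ {z | ∃ y, ∀ k, (A z *ᵥ x) k + (B *ᵥ y) k ≤ r z k} := by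
  rintro z₁ ⟨y₁, h₁⟩ z₂ ⟨y₂, h₂⟩ a b ha hb hab
  refine ⟨a • y₁ + b • y₂, fun k => ?_⟩
  rw [Convex.combo_affine_apply hab, Convex.combo_affine_apply hab]
  simp only [add_mulVec, smul_mulVec, mulVec_add, mulVec_smul, Pi.add_apply, Pi.smul_apply,
    smul_eq_mul]
  linear_combination a * h₁ k + b * h₂ k

theorem exists_twoStageFeasible_convexHull
    (A : (Fin L → ℝ) →ᵃ[ℝ] Matrix (Fin m) (Fin nx) ℝ) (B : Matrix (Fin m) (Fin ny) ℝ)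
    (r : (Fin L → ℝ) →ᵃ[ℝ] (Fin m → ℝ)) (x : Fin nx → ℝ) {V : Set (Fin L → ℝ)}
    (hV : ∀ v ∈ V, ∃ y, ∀ k, (A v *ᵥ x) k + (B *ᵥ y) k ≤ r v k) :
    ∃ y, TwoStageFeasible A B r (convexHull ℝ V) x y := by
  have hull := convexHull_min hV (convex_setOf_exists_recourse A B r x)
  choose! y hy using fun z (hz : z ∈ convexHull ℝ V) => hull hz
  exact ⟨y, hy⟩

/-- With `U = conv{z^1,…,z^N}` and `d = 0`: if `(x̄, ȳ^1, …, ȳ^N)` is optimal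
to the LP `min c(z̄)ᵀx  s.t.  c(z^i)ᵀx ≤ OPT, A(z^i)x + B y^i ≤ r(z^i) ∀i`,
where `z̄` is any relative-interior point of `U` and `OPT` is the optimal
worst-case value, then `x̄` is Pareto adaptively robustly optimal. -/
theorem stmt16
    (zpts : Fin N → (Fin L → ℝ))
    (c : (Fin L → ℝ) →ᵃ[ℝ] (Fin nx → ℝ))
    (A : (Fin L → ℝ) →ᵃ[ℝ] Matrix (Fin m) (Fin nx) ℝ) (B : Matrix (Fin m) (Fin ny) ℝ)
    (r : (Fin L → ℝ) →ᵃ[ℝ] (Fin m → ℝ))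
    (U : Set (Fin L → ℝ)) (hUdef : U = convexHull ℝ (Set.range zpts))
    (OPT : ℝ)
    (hOPT : IsLeast ((fun x => ⨆ z : U, c z ⬝ᵥ x) ''
      {x : Fin nx → ℝ | ∃ y, TwoStageFeasible A B r U x y}) OPT)
    (zbar : Fin L → ℝ) (hzbar : zbar ∈ intrinsicInterior ℝ U)
    (xbar : Fin nx → ℝ) (ybar : Fin N → (Fin ny → ℝ))
    (hfeas : ∀ i : Fin N, c (zpts i) ⬝ᵥ xbar ≤ OPT ∧
      ∀ k, (A (zpts i)).mulVec xbar k + B.mulVec (ybar i) k ≤ r (zpts i) k)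
    (hopt : ∀ (x' : Fin nx → ℝ) (y' : Fin N → (Fin ny → ℝ)),
      (∀ i : Fin N, c (zpts i) ⬝ᵥ x' ≤ OPT ∧
        ∀ k, (A (zpts i)).mulVec x' k + B.mulVec (y' i) k ≤ r (zpts i) k) →
      c zbar ⬝ᵥ xbar ≤ c zbar ⬝ᵥ x') :
    IsPAROx c A B r U xbar := by
  subst hUdef
  set U := convexHull ℝ (Set.range zpts)
  have hvert : ∀ i, zpts i ∈ U := fun i => subset_convexHull ℝ _ (Set.mem_range_self i)
  have hzbarU : zbar ∈ U := intrinsicInterior_subset hzbar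
  have hworst : ∀ z ∈ U, c z ⬝ᵥ xbar ≤ OPT :=
    convexHull_min (Set.forall_mem_range.2 fun i => (hfeas i).1)
      ((convex_Iic OPT).affine_preimage (c.dotProductRight xbar))
  have hARO : IsAROx c A B r U xbar := by
    refine ⟨exists_twoStageFeasible_convexHull A B r xbar
      (Set.forall_mem_range.2 fun i => ⟨ybar i, (hfeas i).2⟩), fun x' hx' => ?_⟩
    have : Nonempty U := ⟨⟨zbar, hzbarU⟩⟩
    exact (ciSup_le fun z : U => hworst z z.2).trans (hOPT.2 ⟨x', hx', rfl⟩)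
  refine ⟨hARO, ?_⟩
  rintro ⟨xs, ⟨⟨ys, hys⟩, -⟩, hdom, z₀, hz₀, hlt⟩
  have hle : c zbar ⬝ᵥ xbar ≤ c zbar ⬝ᵥ xs :=
    hopt xs (fun i => ys (zpts i))
      fun i => ⟨(hdom _ (hvert i)).trans (hfeas i).1, hys _ (hvert i)⟩
  have hmin : IsMinOn (c.dotProductRight (xbar - xs)) U zbar := isMinOn_iff.2 fun z hz => by
    simp only [dotProductRight_apply, dotProduct_sub]
    linarith [hdom z hz]
  have hconst := (c.dotProductRight (xbar - xs)).eq_of_isMinOn_of_mem_intrinsicInterior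
    hzbar hmin hz₀
  simp only [dotProductRight_apply, dotProduct_sub] at hconst
  linarith

end
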